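/- arXiv:1107.1904 — 2 statements merged into one kernel-verified Lean document; each statement's English description precedes it below -/
import Mathlib

section
/- Let d ≥ 1, r ≥ 2, N = (d+1)(r-1), and N' = (d+2)(r-1) = N + r - 1. Suppose the colored Tverberg property holds for parameter (d+1, r) and manifold M × [0,1]: i.e., for the specific map f' : Δ_{N'} → M × [0,1] defined from f by sending the point with barycentric coordinates (λ_0,…,λ_{N'}) to (f(λ_0 v_0 + ⋯ + λ_{N-1} v_{N-1} + (λ_N + ⋯ + λ_{N'}) v_N), λ_{N+1} + ⋯ + λ_{N'}), any r disjoint rainbow faces F'_1, …, F'_r of Δ_{N'} with intersecting images under f' yield, by setting F_i = F'_i ∩ Δ_N, r disjoint rainbow faces of Δ_N whose images under f intersect. In particular, the common intersection point of the f'(F'_i) lies in M × {0}, and each F_i is nonempty. -/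
open scoped BigOperators
open Classical

/-- The geometric face of the standard simplex spanned by a set `F` of vertices. -/
def geomFace {n : ℕ} (F : Finset (Fin n)) : Set (stdSimplex ℝ (Fin n)) :=
  {x | ∀ v : Fin n, (x : Fin n → ℝ) v ≠ 0 → v ∈ F}

/-!
Only `r - 1` vertices of `Δ_{N'}` lie off `Δ_N`, so one of the `r` disjoint faces `F'_{i₀}`
avoids them all, and the second coordinate of `f'` vanishes on it: `p ∈ M × {0}`. Hence every
preimage `x_i ∈ F'_i` of `p` has no mass on the new vertices, so its push-forward along the map
`Δ_{N'} → Δ_N` merging `v_N, …, v_{N'}` into `v_N` lies in `F_i` and is sent to `p.1` by `f`.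
-/

open Finset Function

theorem Finset.exists_disjoint_of_card_lt {ι α : Type*} [Fintype ι] {F : ι → Finset α}
    (hF : Pairwise (Disjoint on F)) {S : Finset α} (hS : #S < Fintype.card ι) :
    ∃ i, Disjoint (F i) S := by
  by_contra! h
  choose g hgF hgS using fun i => not_disjoint_iff.1 (h i)
  obtain ⟨i, j, hij, hg⟩ := Fintype.exists_ne_map_eq_of_card_lt
    (fun i => (⟨g i, hgS i⟩ : S)) (by simpa using hS)
  have hgij : g i = g j := congrArg Subtype.val hg
  exact not_disjoint_iff.2 ⟨g i, hgF i, hgij ▸ hgF j⟩ (hF hij)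

theorem Fin.card_filter_le_val {n k : ℕ} : #{j : Fin n | k ≤ (j : ℕ)} = n - k := by
  simp only [← not_lt, filter_not, card_sdiff_of_subset (filter_subset _ _), card_univ,
    Fintype.card_fin, Fin.card_filter_val_lt]
  omega

section geomFace

variable {n : ℕ} {F G S : Finset (Fin n)} {x : stdSimplex ℝ (Fin n)}

theorem geomFace_mono (h : F ⊆ G) : geomFace F ⊆ geomFace G :=
  fun _ hx v hv => h (hx v hv)

theorem geomFace_inter : geomFace (F ∩ G) = geomFace F ∩ geomFace G := by
  ext x
  simp only [geomFace, Set.mem_ofPred_eq, Set.mem_inter_iff, mem_inter]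
  exact ⟨fun h => ⟨fun v hv => (h v hv).1, fun v hv => (h v hv).2⟩,
    fun h v hv => ⟨h.1 v hv, h.2 v hv⟩⟩

theorem sum_eq_zero_iff_mem_geomFace_compl :
    ∑ j ∈ S, (x : Fin n → ℝ) j = 0 ↔ x ∈ geomFace Sᶜ := by
  rw [sum_eq_zero_iff_of_nonneg fun j _ => stdSimplex.zero_le x j]
  exact ⟨fun h v hv => mem_compl.2 fun hvS => hv (h v hvS),
    fun h v hvS => by_contra fun hv => mem_compl.1 (h v hv) hvS⟩

theorem sum_eq_zero_of_mem_geomFace (hx : x ∈ geomFace F) (h : Disjoint F S) :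
    ∑ j ∈ S, (x : Fin n → ℝ) j = 0 :=
  sum_eq_zero_iff_mem_geomFace_compl.2 <|
    geomFace_mono (subset_compl_iff_disjoint_right.2 h) hx

theorem Finset.Nonempty.of_mem_geomFace (hx : x ∈ geomFace F) : F.Nonempty := by
  obtain ⟨v, hv⟩ : ∃ v, (x : Fin n → ℝ) v ≠ 0 := by
    by_contra! h
    simpa [h] using stdSimplex.sum_eq_one x
  exact ⟨v, hx v hv⟩

theorem map_mem_geomFace {m : ℕ} (f : Fin n → Fin m) (hx : x ∈ geomFace F) :
    stdSimplex.map f x ∈ geomFace (F.image f) := by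
  intro w hw
  rw [stdSimplex.map_coe, FunOnFinite.linearMap_apply_apply] at hw
  obtain ⟨v, hv, hvx⟩ := exists_ne_zero_of_sum_ne_zero hw
  exact mem_image.2 ⟨v, hx v hvx, (mem_filter.1 hv).2⟩

end geomFace

def mergeTail (N r : ℕ) (v : Fin (N + r)) : Fin (N + 1) :=
  ⟨min v N, by omega⟩

section mergeTail

variable {N r : ℕ} (x : stdSimplex ℝ (Fin (N + r)))

theorem map_mergeTail_apply_of_lt {i : ℕ} (hi : i < N) :
    (stdSimplex.map (mergeTail N r) x : Fin (N + 1) → ℝ) ⟨i, by omega⟩ =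
      (x : Fin (N + r) → ℝ) ⟨i, by omega⟩ := by
  rw [stdSimplex.map_coe, FunOnFinite.linearMap_apply_apply]
  convert sum_singleton (x : Fin (N + r) → ℝ) (⟨i, by omega⟩ : Fin (N + r))
  ext j
  simp only [mergeTail, mem_filter, mem_univ, true_and, mem_singleton, Fin.ext_iff]
  omega

theorem map_mergeTail_apply_last :
    (stdSimplex.map (mergeTail N r) x : Fin (N + 1) → ℝ) ⟨N, by omega⟩ =
      ∑ j ∈ univ.filter (fun j : Fin (N + r) => N ≤ (j : ℕ)), (x : Fin (N + r) → ℝ) j := by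
  rw [stdSimplex.map_coe, FunOnFinite.linearMap_apply_apply]
  congr 1
  ext j
  simp only [mergeTail, mem_filter, mem_univ, true_and, Fin.ext_iff]
  omega

theorem image_mergeTail_subset (h : N + 1 ≤ N + r) (F : Finset (Fin (N + r))) :
    (F ∩ (univ.filter fun j : Fin (N + r) => N + 1 ≤ (j : ℕ))ᶜ).image (mergeTail N r) ⊆
      univ.filter fun v => Fin.castLE h v ∈ F := by
  intro w hw
  obtain ⟨j, hj, rfl⟩ := mem_image.1 hw
  simp only [mem_inter, mem_compl, mem_filter, mem_univ, true_and, not_le] at hj ⊢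
  convert hj.1
  ext
  simp only [mergeTail, Fin.val_castLE]
  omega

end mergeTail

theorem colored_Tverberg_reduction
    (r : ℕ) (hr : 2 ≤ r)
    (N : ℕ)
    (M : Type*) [TopologicalSpace M]
    (ι : Type) (color : Fin (N+1) → ι)
    (f : C(stdSimplex ℝ (Fin (N+1)), M))
    -- the new coloring of `Δ_{N'}`: old colors on the front face, one new color `none`
    (color' : Fin (N+r) → Option ι)
    (hcolor' : ∀ v : Fin (N+r), color' v =
      if h : (v : ℕ) < N + 1 then some (color ⟨v, h⟩) else none)
    -- the map `f' : Δ_{N'} → M × [0,1] ⊆ M × ℝ`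
    (f' : C(stdSimplex ℝ (Fin (N+r)), M × ℝ))
    (hf' : ∀ (x : stdSimplex ℝ (Fin (N+r))) (y : stdSimplex ℝ (Fin (N+1))),
      (∀ i : ℕ, (hi : i < N) →
        (y : Fin (N+1) → ℝ) ⟨i, by omega⟩ = (x : Fin (N+r) → ℝ) ⟨i, by omega⟩) →
      ((y : Fin (N+1) → ℝ) ⟨N, by omega⟩ =
        ∑ j ∈ Finset.univ.filter (fun j : Fin (N+r) => N ≤ (j : ℕ)), (x : Fin (N+r) → ℝ) j) →
      f' x = (f y,
        ∑ j ∈ Finset.univ.filter (fun j : Fin (N+r) => N + 1 ≤ (j : ℕ)), (x : Fin (N+r) → ℝ) j))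
    -- a colored Tverberg partition for `f'`
    (F' : Fin r → Finset (Fin (N+r)))
    (hdisj' : Pairwise fun i j => Disjoint (F' i) (F' j))
    (hrainbow' : ∀ i, Set.InjOn color' (F' i : Set (Fin (N+r))))
    (p : M × ℝ)
    (hp : ∀ i, p ∈ f' '' geomFace (F' i)) :
    -- conclusion: `p` lies in `M × {0}`, and the restricted faces `F_i = F'_i ∩ Δ_N`
    -- form a colored Tverberg partition for `f`
    p.2 = 0 ∧
    ∀ F : Fin r → Finset (Fin (N+1)),
      (∀ i, F i = Finset.univ.filter
        (fun v : Fin (N+1) => Fin.castLE (by omega) v ∈ F' i)) →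
      (∀ i, (F i).Nonempty) ∧
      (Pairwise fun i j => Disjoint (F i) (F j)) ∧
      (∀ i, Set.InjOn color (F i : Set (Fin (N+1)))) ∧
      p.1 ∈ ⋂ i, f '' geomFace (F i) := by
  choose x hxF hxp using hp
  set high := univ.filter fun j : Fin (N + r) => N + 1 ≤ (j : ℕ)
  have hf'x : ∀ i, f' (x i) = (f (stdSimplex.map (mergeTail N r) (x i)), ∑ j ∈ high, x i j) :=
    fun i => hf' _ _ (fun _ hk => map_mergeTail_apply_of_lt _ hk) (map_mergeTail_apply_last _)
  obtain ⟨i₀, hi₀⟩ := exists_disjoint_of_card_lt hdisj' (S := high)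
    (by rw [Fin.card_filter_le_val, Fintype.card_fin]; omega)
  have hp2 : p.2 = 0 := by
    rw [← hxp i₀, hf'x]
    exact sum_eq_zero_of_mem_geomFace (hxF i₀) hi₀
  have hx_low : ∀ i, x i ∈ geomFace highᶜ := fun i =>
    sum_eq_zero_iff_mem_geomFace_compl.1 (by rw [← hp2, ← hxp i, hf'x])
  refine ⟨hp2, fun F hF => ?_⟩
  have hyF : ∀ i, stdSimplex.map (mergeTail N r) (x i) ∈ geomFace (F i) := fun i => by
    rw [hF i]
    refine geomFace_mono (image_mergeTail_subset _ _) (map_mem_geomFace _ ?_)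
    rw [geomFace_inter]
    exact ⟨hxF i, hx_low i⟩
  refine ⟨fun i => .of_mem_geomFace (hyF i), fun i j hij => ?_, fun i => ?_, ?_⟩
  · show Disjoint (F i) (F j)
    rw [hF i, hF j]
    exact disjoint_filter.2 fun v _ hvi hvj => disjoint_left.1 (hdisj' hij) hvi hvj
  · have hcolor_castLE : some ∘ color = color' ∘ Fin.castLE (by omega) :=
      funext fun v => by simp [hcolor', Fin.is_le]
    refine Set.InjOn.of_comp (g := some) ?_
    rw [hcolor_castLE, hF i]
    exact (hrainbow' i).comp (Fin.castLE_injective _).injOn fun v hv => (mem_filter.1 hv).2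
  · exact Set.mem_iInter.2 fun i => ⟨_, hyF i, by rw [← hxp i, hf'x]⟩
end

section
/- For every r ≥ 2 and d ≥ 1, there exist N+1 = (d+1)(r-1)+1 points in ℝ^d together with a coloring in which one color class has size exactly r and all other color classes are singletons, such that there is no partition of the points into r rainbow subsets whose convex hulls have a common point. -/
/-!
The `r = m + 1` points of the large color class are the apex `a = (2, …, 2)` and `m` copies of
`-a`; every standard basis vector `e_j` is added `m` times, each copy its own color. In a colored
Tverberg partition with common point `y`, the part containing `a` has its remaining points among
the `e_j` with `j` in some set `S`. Each `e_j` has only `m` copies for `m + 1` parts, so for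
`j ∈ S` some other part avoids `e_j`, which forces `y_j ≤ 0`; any other part forces `∑ y ≤ 1`.
Yet the functional `∑_{j ∈ S} x_j + ∑ x_j` is at least `2` on the part containing `a`.
-/

open Classical

open Finset

section ConvexHull

variable {ι E : Type*} [AddCommGroup E] [Module ℝ E]

theorem LinearMap.le_of_mem_convexHull_image (f : E →ₗ[ℝ] ℝ) {p : ι → E} {s : Set ι} {c : ℝ}
    (h : ∀ v ∈ s, f (p v) ≤ c) {y : E} (hy : y ∈ convexHull ℝ (p '' s)) : f y ≤ c :=
  convexHull_min (t := {w | f w ≤ c}) (Set.forall_mem_image.2 h)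
    (convex_halfSpace_le f.isLinear c) hy

theorem LinearMap.ge_of_mem_convexHull_image (f : E →ₗ[ℝ] ℝ) {p : ι → E} {s : Set ι} {c : ℝ}
    (h : ∀ v ∈ s, c ≤ f (p v)) {y : E} (hy : y ∈ convexHull ℝ (p '' s)) : c ≤ f y :=
  convexHull_min (t := {w | c ≤ f w}) (Set.forall_mem_image.2 h)
    (convex_halfSpace_ge f.isLinear c) hy

end ConvexHull

theorem Finset.exists_ne_forall_notMem_of_card_lt {P K α : Type*} [Fintype P] [Fintype K]
    {F : P → Finset α} (hF : Pairwise fun i j => Disjoint (F i) (F j)) (g : K → α)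
    (hK : Fintype.card K < Fintype.card P) {i₀ : P} (hi₀ : ∃ k, g k ∈ F i₀) :
    ∃ i ≠ i₀, ∀ k, g k ∉ F i := by
  by_contra! h
  have hall : ∀ i, ∃ k, g k ∈ F i := fun i => if hi : i = i₀ then hi ▸ hi₀ else h i hi
  choose f hf using hall
  have hinj : Function.Injective f := by
    intro i i' hii'
    by_contra hne
    exact disjoint_left.1 (hF hne) (hf i) (hii' ▸ hf i')
  exact (Fintype.card_le_of_injective f hinj).not_gt hK

def IsColoredTverbergPartition {X P ι E : Type*} [AddCommGroup E] [Module ℝ E] [Fintype X]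
    [DecidableEq X] [Fintype P] (p : X → E) (color : X → ι) (F : P → Finset X) : Prop :=
  (Pairwise fun i j => Disjoint (F i) (F j)) ∧ (Finset.univ.biUnion F = Finset.univ) ∧
    (∀ i, Set.InjOn color (F i : Set X)) ∧ (⋂ i, convexHull ℝ (p '' (F i : Set X))).Nonempty

theorem IsColoredTverbergPartition.map_equiv {X Y P ι E : Type*} [AddCommGroup E] [Module ℝ E]
    [Fintype X] [DecidableEq X] [Fintype Y] [DecidableEq Y] [Fintype P] {p : Y → E}
    {color : Y → ι} {F : P → Finset X} (e : X ≃ Y)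
    (hF : IsColoredTverbergPartition (p ∘ e) (color ∘ e) F) :
    IsColoredTverbergPartition p color fun i => (F i).map e.toEmbedding := by
  obtain ⟨hdisj, hcover, hrainbow, hcommon⟩ := hF
  refine ⟨fun i j hij => (disjoint_map _).2 (hdisj hij), ?_, fun i => ?_, ?_⟩
  · simp only [eq_univ_iff_forall, mem_biUnion, mem_univ, true_and, mem_map_equiv] at hcover ⊢
    exact fun y => hcover _
  · rw [coe_map]
    exact (hrainbow i).image_of_comp
  · simpa only [coe_map, Equiv.coe_toEmbedding, Set.image_comp] using hcommon

noncomputable def coordSum {ι : Type*} (s : Finset ι) : EuclideanSpace ℝ ι →ₗ[ℝ] ℝ :=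
  ∑ j ∈ s, (EuclideanSpace.proj j : EuclideanSpace ℝ ι →L[ℝ] ℝ).toLinearMap

@[simp]
theorem coordSum_apply {ι : Type*} (s : Finset ι) (x : EuclideanSpace ℝ ι) :
    coordSum s x = ∑ j ∈ s, x j := by
  simp [coordSum]

abbrev SharpIndex (m d : ℕ) : Type := Option (Fin m) ⊕ Fin d × Fin m

noncomputable def sharpPoint (m d : ℕ) : SharpIndex m d → EuclideanSpace ℝ (Fin d)
  | .inl none => WithLp.toLp 2 fun _ => 2
  | .inl (some _) => WithLp.toLp 2 fun _ => -2
  | .inr (j, _) => EuclideanSpace.single j 1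

def sharpColor {m d : ℕ} : SharpIndex m d → Option (Fin d × Fin m) :=
  Sum.elim (fun _ => none) some

section SharpConfiguration

variable {m d : ℕ}

@[simp]
theorem sharpColor_inl (a : Option (Fin m)) : sharpColor (.inl a : SharpIndex m d) = none := rfl

@[simp]
theorem sharpColor_inr (x : Fin d × Fin m) : sharpColor (.inr x : SharpIndex m d) = some x := rfl

theorem card_filter_sharpColor_eq_none : #{w : SharpIndex m d | sharpColor w = none} = m + 1 := by
  have : ({w | sharpColor w = none} : Finset (SharpIndex m d)) = univ.map .inl := by
    ext (w | w) <;> simp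
  simp [this]

theorem card_filter_sharpColor_eq_some (x : Fin d × Fin m) :
    #{w : SharpIndex m d | sharpColor w = some x} = 1 :=
  card_eq_one.2 ⟨.inr x, by ext (w | w) <;> simp⟩

theorem coordSum_sharpPoint_le_one (s : Finset (Fin d)) {v : SharpIndex m d}
    (hv : v ≠ .inl none) : coordSum s (sharpPoint m d v) ≤ 1 := by
  rcases v with (_ | k) | ⟨j, k⟩
  · exact absurd rfl hv
  · simp only [sharpPoint, coordSum_apply, sum_neg_distrib, sum_const, nsmul_eq_mul]
    linarith [Nat.cast_nonneg (α := ℝ) #s]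
  · simp only [sharpPoint, coordSum_apply, PiLp.single_apply, sum_ite_eq']
    split_ifs <;> norm_num

theorem coordSum_sharpPoint_nonpos (s : Finset (Fin d)) {v : SharpIndex m d}
    (hv : v ≠ .inl none) (hs : ∀ j ∈ s, ∀ k, v ≠ .inr (j, k)) :
    coordSum s (sharpPoint m d v) ≤ 0 := by
  rcases v with (_ | k) | ⟨j, k⟩
  · exact absurd rfl hv
  · simp [sharpPoint]
  · simp only [sharpPoint, coordSum_apply, PiLp.single_apply, sum_ite_eq']
    rw [if_neg fun hj => hs j hj k rfl]

theorem two_le_coordSum_sharpPoint (hd : 1 ≤ d) (S : Finset (Fin d)) {v : SharpIndex m d}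
    (hv : ∀ k, v ≠ .inl (some k)) (hS : ∀ j k, v = .inr (j, k) → j ∈ S) :
    2 ≤ coordSum S (sharpPoint m d v) + coordSum univ (sharpPoint m d v) := by
  rcases v with (_ | k) | ⟨j, k⟩
  · have hd' : (1 : ℝ) ≤ d := by exact_mod_cast hd
    simp only [sharpPoint, coordSum_apply, sum_const, nsmul_eq_mul, card_univ, Fintype.card_fin]
    linarith [Nat.cast_nonneg (α := ℝ) #S]
  · exact absurd rfl (hv k)
  · simp [sharpPoint, PiLp.single_apply, hS j k rfl]
    norm_num

theorem not_isColoredTverbergPartition_sharpPoint (hd : 1 ≤ d) {P : Type*} [Fintype P]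
    (hmP : m < Fintype.card P) (hP : 1 < Fintype.card P) (F : P → Finset (SharpIndex m d)) :
    ¬ IsColoredTverbergPartition (sharpPoint m d) sharpColor F := by
  rintro ⟨hdisj, hcover, hrainbow, y, hy⟩
  rw [Set.mem_iInter] at hy
  obtain ⟨i₀, hi₀⟩ : ∃ i, .inl none ∈ F i := by
    simpa [← hcover] using mem_univ (.inl none : SharpIndex m d)
  have apex_notMem : ∀ i ≠ i₀, ∀ v ∈ F i, v ≠ .inl none :=
    fun i hi v hv hv' => disjoint_left.1 (hdisj hi) (hv' ▸ hv) hi₀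
  set S := univ.filter fun j => ∃ k, .inr (j, k) ∈ F i₀
  have h_total : coordSum univ y ≤ 1 := by
    obtain ⟨i, hi⟩ := Fintype.exists_ne_of_one_lt_card hP i₀
    exact (coordSum univ).le_of_mem_convexHull_image
      (fun v hv => coordSum_sharpPoint_le_one _ (apex_notMem i hi v hv)) (hy i)
  have h_S : coordSum S y ≤ 0 := by
    rw [coordSum_apply]
    refine sum_nonpos fun j hj => ?_
    obtain ⟨i, hi, hmiss⟩ := exists_ne_forall_notMem_of_card_lt hdisj
      (fun k => (.inr (j, k) : SharpIndex m d)) (by simpa using hmP) (by simpa [S] using hj)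
    simpa using (coordSum {j}).le_of_mem_convexHull_image
      (fun v hv => coordSum_sharpPoint_nonpos _ (apex_notMem i hi v hv) (by
        rintro _ hj' k rfl
        exact hmiss k (mem_singleton.1 hj' ▸ hv))) (hy i)
  have h_apex : 2 ≤ coordSum S y + coordSum univ y :=
    (coordSum S + coordSum univ).ge_of_mem_convexHull_image (fun v hv =>
      two_le_coordSum_sharpPoint hd S
        (fun k hk => by
          subst hk
          exact absurd (hrainbow i₀ (mem_coe.2 hv) (mem_coe.2 hi₀) rfl) (by simp))
        (fun j k hjk => by simpa [S] using ⟨k, hjk ▸ hv⟩)) (hy i₀)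
  linarith

end SharpConfiguration

theorem card_sharpIndex (m d : ℕ) : Fintype.card (SharpIndex m d) = (d + 1) * m + 1 := by
  simp only [Fintype.card_sum, Fintype.card_option, Fintype.card_fin, Fintype.card_prod]
  ring

/-- **Tightness of the color class bound.** For every `r ≥ 2` and `d ≥ 1` there are
`N+1 = (d+1)(r-1)+1` points in `ℝ^d` and a coloring with one color class of size exactly `r`
and all other classes singletons, admitting no colored Tverberg partition: there is no
partition of the points into `r` pairwise disjoint rainbow subsets whose convex hulls have
a common point. -/
theorem colored_Tverberg_sharp_color_bound
    (d r : ℕ) (hd : 1 ≤ d) (hr : 2 ≤ r)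
    (N : ℕ) (hN : N = (d + 1) * (r - 1)) :
    ∃ (p : Fin (N+1) → EuclideanSpace ℝ (Fin d)) (ι : Type) (color : Fin (N+1) → ι) (c₀ : ι),
      (Finset.univ.filter (fun v => color v = c₀)).card = r ∧
      (∀ c : ι, c ≠ c₀ → (Finset.univ.filter (fun v => color v = c)).card = 1) ∧
      ¬ ∃ F : Fin r → Finset (Fin (N+1)),
          (Pairwise fun i j => Disjoint (F i) (F j)) ∧
          (Finset.univ.biUnion F = Finset.univ) ∧
          (∀ i, Set.InjOn color (F i : Set (Fin (N+1)))) ∧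
          (⋂ i, convexHull ℝ (p '' (F i : Set (Fin (N+1))))).Nonempty := by
  let e : Fin (N + 1) ≃ SharpIndex (r - 1) d :=
    (Fintype.equivFinOfCardEq (by rw [card_sharpIndex, hN])).symm
  refine ⟨sharpPoint (r - 1) d ∘ e, _, sharpColor ∘ e, none, ?_, ?_, ?_⟩
  · calc _ = #{w | sharpColor w = none} := card_equiv e (by simp)
      _ = r := by rw [card_filter_sharpColor_eq_none]; omega
  · intro c hc
    obtain ⟨x, rfl⟩ := Option.ne_none_iff_exists'.1 hc
    exact (card_equiv e (by simp)).trans (card_filter_sharpColor_eq_some x)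
  · rintro ⟨F, hF⟩
    exact not_isColoredTverbergPartition_sharpPoint hd (by simp; omega) (by simp; omega) _
      (IsColoredTverbergPartition.map_equiv e hF)
end
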